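/- arXiv:2212.08347 — 2 statements merged into one kernel-verified Lean document; each statement's English description precedes it below -/
import Mathlib

section
/- Let G be a nontrivial totally ordered abelian group and a > 0 in G. The conductive monoid M_a = {0} ∪ {g ∈ G : g ≥ a} is a finite factorization monoid if and only if G is cyclic (infinite cyclic). -/
/-!
The atoms of `M_a` are exactly the elements of `[a, 2a)`. If `M_a` is an FFM, then every
`t ∈ (a, 2a)` gives the factorization `3a = t + (3a - t)`, so `(a, 2a)` is finite; atomicity
bounds every element by a multiple of `a`, and finiteness of `(0, a)` bounds `a` by a multiple of
every positive element, so `G` is archimedean. An archimedean group with a finite nondegenerate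
interval is not densely ordered, hence is `ℤ`. Conversely, in an archimedean group every
`x ≥ a` splits off copies of `a` until it falls into `[a, 2a)`, and a factorization of
`x ≤ n • a` consists of at most `n` atoms taken from the finite set `[a, 2a)`.
-/

/-- `x` is invertible within the subset `S` of the ambient monoid. -/
def SUnit {A : Type*} [AddCommMonoid A] (S : Set A) (x : A) : Prop := ∃ y ∈ S, x + y = 0

/-- `a` is an atom of the subset (submonoid) `S`: it is non-invertible in `S` and
cannot be written as a sum of two non-invertible elements of `S`. -/
def SAtom {A : Type*} [AddCommMonoid A] (S : Set A) (a : A) : Prop :=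
  a ∈ S ∧ ¬ SUnit S a ∧ ∀ b ∈ S, ∀ c ∈ S, a = b + c → SUnit S b ∨ SUnit S c

/-- `x` is an atomic element of `S`: invertible in `S` or a finite sum of atoms of `S`. -/
def SAtomicElem {A : Type*} [AddCommMonoid A] (S : Set A) (x : A) : Prop :=
  SUnit S x ∨ ∃ l : Multiset A, (∀ a ∈ l, SAtom S a) ∧ l.sum = x

/-- The subset (submonoid) `S` is atomic. -/
def SAtomic {A : Type*} [AddCommMonoid A] (S : Set A) : Prop :=
  ∀ x ∈ S, SAtomicElem S x

open Set

section Factorization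

variable {A : Type*} [AddCommMonoid A]

def factorizations (S : Set A) (x : A) : Set (Multiset A) :=
  {l | (∀ b ∈ l, SAtom S b) ∧ l.sum = x}

def IsFFM (S : Set A) : Prop :=
  SAtomic S ∧ ∀ x ∈ S, (factorizations S x).Finite

end Factorization

theorem Multiset.le_card_nsmul_of_forall_mem {α : Type*} [DecidableEq α] {s : Finset α}
    {l : Multiset α} (h : ∀ x ∈ l, x ∈ s) : l ≤ Multiset.card l • s.val := by
  rw [Multiset.le_iff_count]
  intro x
  by_cases hx : x ∈ l
  · rw [Multiset.count_nsmul, Multiset.count_eq_one_of_mem s.nodup (h x hx), mul_one]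
    exact Multiset.count_le_card x l
  · simp [Multiset.count_eq_zero_of_notMem hx]

theorem Set.Finite.setOf_multiset_card_le {α : Type*} {s : Set α} (hs : s.Finite) (n : ℕ) :
    {l : Multiset α | (∀ x ∈ l, x ∈ s) ∧ Multiset.card l ≤ n}.Finite := by
  classical
  refine (Multiset.powerset (n • hs.toFinset.val)).finite_toSet.subset ?_
  rintro l ⟨hls, hln⟩
  refine Multiset.mem_powerset.2 ?_
  calc l ≤ Multiset.card l • hs.toFinset.val :=
        Multiset.le_card_nsmul_of_forall_mem (by simpa using hls)
    _ ≤ n • hs.toFinset.val := nsmul_le_nsmul_left (Multiset.zero_le _) hln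

section Conductive

variable {G : Type*} [AddCommGroup G] [LinearOrder G] {a x : G}

def conductiveMonoid (a : G) : Set G := {0} ∪ Ici a

lemma nonneg_of_mem_conductiveMonoid (ha : 0 ≤ a) (hx : x ∈ conductiveMonoid a) : 0 ≤ x :=
  hx.elim Eq.ge ha.trans

lemma sUnit_zero_conductiveMonoid : SUnit (conductiveMonoid a) 0 :=
  ⟨0, Or.inl rfl, add_zero 0⟩

variable [IsOrderedAddMonoid G]

lemma not_sUnit_conductiveMonoid_of_pos (ha : 0 ≤ a) (hx : 0 < x) :
    ¬ SUnit (conductiveMonoid a) x := by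
  rintro ⟨y, hy, hxy⟩
  exact (add_pos_of_pos_of_nonneg hx (nonneg_of_mem_conductiveMonoid ha hy)).ne' hxy

lemma sAtom_conductiveMonoid_iff (ha : 0 < a) {t : G} :
    SAtom (conductiveMonoid a) t ↔ t ∈ Ico a (a + a) := by
  constructor
  · rintro ⟨ht, htu, hdec⟩
    have hat : a ≤ t := ht.resolve_left fun h => htu (h ▸ sUnit_zero_conductiveMonoid)
    refine ⟨hat, lt_of_not_ge fun h2 => ?_⟩
    rcases hdec a (Or.inr le_rfl) (t - a) (Or.inr (le_sub_iff_add_le.2 h2)) (by abel) with hu | hu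
    · exact not_sUnit_conductiveMonoid_of_pos ha.le ha hu
    · exact not_sUnit_conductiveMonoid_of_pos ha.le
        (sub_pos.2 ((lt_add_of_pos_right a ha).trans_le h2)) hu
  · rintro ⟨h1, h2⟩
    refine ⟨Or.inr h1, not_sUnit_conductiveMonoid_of_pos ha.le (ha.trans_le h1), ?_⟩
    rintro b (rfl | hab) c (rfl | hac) rfl
    · exact Or.inl sUnit_zero_conductiveMonoid
    · exact Or.inl sUnit_zero_conductiveMonoid
    · exact Or.inr sUnit_zero_conductiveMonoid
    · exact absurd h2 (add_le_add hab hac).not_gt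

lemma finite_Ioo_of_finite_factorizations (ha : 0 < a)
    (h : (factorizations (conductiveMonoid a) (a + a + a)).Finite) :
    (Ioo a (a + a)).Finite := by
  refine (h.biUnion fun l _ => l.finite_toSet).subset fun t ht => ?_
  have hcompl : a + a + a - t ∈ Ioo a (a + a) := by
    constructor
    · rw [lt_sub_iff_add_lt, add_assoc]; exact add_lt_add_right ht.2 a
    · rw [sub_lt_iff_lt_add]; exact add_lt_add_right ht.1 (a + a)
  refine mem_biUnion (x := {t, a + a + a - t}) ⟨fun b hb => ?_, by simp⟩ (by simp)
  rw [sAtom_conductiveMonoid_iff ha]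
  rcases Multiset.mem_cons.1 hb with rfl | hb
  · exact Ioo_subset_Ico_self ht
  rw [Multiset.mem_singleton.1 hb]
  exact Ioo_subset_Ico_self hcompl

lemma exists_le_nsmul_of_sAtomic (ha : 0 < a) (h : SAtomic (conductiveMonoid a)) (x : G) :
    ∃ n : ℕ, x ≤ n • a := by
  rcases lt_or_ge x a with hxa | hax
  · exact ⟨1, by simpa using hxa.le⟩
  rcases h x (Or.inr hax) with hu | ⟨l, hl, rfl⟩
  · exact absurd hu (not_sUnit_conductiveMonoid_of_pos ha.le (ha.trans_le hax))
  refine ⟨Multiset.card l + Multiset.card l, ?_⟩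
  rw [add_nsmul, ← nsmul_add]
  exact l.sum_le_card_nsmul _ fun t ht => ((sAtom_conductiveMonoid_iff ha).1 (hl t ht)).2.le

lemma exists_le_nsmul_of_finite_Ioo (h : (Ioo 0 a).Finite) {y : G} (hy : 0 < y) :
    ∃ n : ℕ, a ≤ n • y := by
  by_contra! hlt
  exact infinite_of_injective_forall_mem (s := Ioo 0 a)
    (f := fun n : ℕ => (n + 1) • y)
    ((nsmul_left_strictMono hy).injective.comp (add_left_injective 1))
    (fun n => ⟨nsmul_pos hy n.succ_ne_zero, hlt _⟩) h

lemma archimedean_of_sAtomic_of_finite_Ioo (ha : 0 < a) (hat : SAtomic (conductiveMonoid a))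
    (hfin : (Ioo a (a + a)).Finite) : Archimedean G := by
  have hfin0 : (Ioo 0 a).Finite :=
    Finite.of_finite_image (by rwa [image_add_const_Ioo, zero_add]) (add_left_injective a).injOn
  refine ⟨fun x {y} hy => ?_⟩
  obtain ⟨n, hn⟩ := exists_le_nsmul_of_sAtomic ha hat x
  obtain ⟨m, hm⟩ := exists_le_nsmul_of_finite_Ioo hfin0 hy
  exact ⟨m * n, hn.trans (by rw [mul_nsmul]; exact nsmul_le_nsmul_right hm n)⟩

lemma factorizations_nonempty_of_le_nsmul (ha : 0 < a) :
    ∀ (n : ℕ) {x : G}, a ≤ x → x ≤ n • a → (factorizations (conductiveMonoid a) x).Nonempty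
  | 0, _, hax, hxn => absurd (hax.trans hxn) (by simpa using ha.not_ge)
  | n + 1, x, hax, hxn => by
    by_cases hx2 : x < a + a
    · exact ⟨{x}, by simpa [sAtom_conductiveMonoid_iff ha] using ⟨hax, hx2⟩, by simp⟩
    obtain ⟨l, hl, hls⟩ := factorizations_nonempty_of_le_nsmul ha n (x := x - a)
      (le_sub_iff_add_le.2 (not_lt.1 hx2)) (by rwa [sub_le_iff_le_add, ← succ_nsmul])
    refine ⟨a ::ₘ l, fun t ht => ?_, by rw [Multiset.sum_cons, hls, add_sub_cancel]⟩
    rcases Multiset.mem_cons.1 ht with rfl | ht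
    · exact (sAtom_conductiveMonoid_iff ha).2 ⟨le_rfl, lt_add_of_pos_right t ha⟩
    · exact hl t ht

lemma sAtomic_conductiveMonoid [Archimedean G] (ha : 0 < a) : SAtomic (conductiveMonoid a) := by
  rintro x (rfl | hax)
  · exact Or.inl sUnit_zero_conductiveMonoid
  obtain ⟨n, hn⟩ := Archimedean.arch x ha
  exact Or.inr (factorizations_nonempty_of_le_nsmul ha n hax hn)

lemma finite_factorizations_conductiveMonoid [Archimedean G] (ha : 0 < a)
    (hfin : (Ioo a (a + a)).Finite) (x : G) :
    (factorizations (conductiveMonoid a) x).Finite := by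
  obtain ⟨n, hn⟩ := Archimedean.arch x ha
  have hIco : (Ico a (a + a)).Finite := by
    rw [← Ioo_insert_left (lt_add_of_pos_right a ha)]; exact hfin.insert a
  refine (hIco.setOf_multiset_card_le n).subset ?_
  rintro l ⟨hl, rfl⟩
  have hl' : ∀ t ∈ l, t ∈ Ico a (a + a) := fun t ht =>
    (sAtom_conductiveMonoid_iff ha).1 (hl t ht)
  refine ⟨hl', (nsmul_le_nsmul_iff_left ha).1 ?_⟩
  exact (Multiset.card_nsmul_le_sum fun t ht => (hl' t ht).1).trans hn

theorem isFFM_conductiveMonoid_iff (ha : 0 < a) :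
    IsFFM (conductiveMonoid a) ↔ Archimedean G ∧ (Ioo a (a + a)).Finite := by
  constructor
  · rintro ⟨hat, hff⟩
    have hfin := finite_Ioo_of_finite_factorizations ha
      (hff _ (Or.inr (le_add_of_nonneg_left (add_pos ha ha).le)))
    exact ⟨archimedean_of_sAtomic_of_finite_Ioo ha hat hfin, hfin⟩
  · rintro ⟨_, hfin⟩
    exact ⟨sAtomic_conductiveMonoid ha,
      fun x _ => finite_factorizations_conductiveMonoid ha hfin x⟩

end Conductive

theorem isAddCyclic_iff_archimedean_and_finite_Ioo {G : Type*} [AddCommGroup G] [LinearOrder G]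
    [IsOrderedAddMonoid G] {a : G} (ha : 0 < a) :
    IsAddCyclic G ↔ Archimedean G ∧ (Ioo a (a + a)).Finite := by
  have : Nontrivial G := ⟨⟨a, 0, ha.ne'⟩⟩
  constructor
  · intro h
    obtain ⟨e⟩ := LinearOrderedAddCommGroup.isAddCyclic_iff_nonempty_equiv_int.1 h
    refine ⟨Archimedean.comap e.toAddMonoidHom e.strictMono, ?_⟩
    exact ((finite_Ioo (e a) (e (a + a))).preimage e.injective.injOn).subset
      fun t ht => ⟨e.strictMono ht.1, e.strictMono ht.2⟩
  · rintro ⟨_, hfin⟩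
    rw [LinearOrderedAddCommGroup.isAddCyclic_iff_not_denselyOrdered]
    intro _
    exact Ioo_infinite (lt_add_of_pos_right a ha) hfin

theorem conductive_monoid_ff_iff_cyclic_general {G : Type*} [AddCommGroup G] [LinearOrder G] [IsOrderedAddMonoid G]
    (a : G) (ha : 0 < a) :
    (SAtomic ({0} ∪ Set.Ici a : Set G) ∧
      ∀ x ∈ ({0} ∪ Set.Ici a : Set G),
        {l : Multiset G | (∀ b ∈ l, SAtom ({0} ∪ Set.Ici a : Set G) b) ∧
          l.sum = x}.Finite) ↔
    ∃ b : G, ∀ g : G, ∃ n : ℤ, g = n • b := by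
  refine (isFFM_conductiveMonoid_iff ha).trans
    ((isAddCyclic_iff_archimedean_and_finite_Ioo ha).symm.trans ⟨?_, ?_⟩)
  · rintro ⟨b, hb⟩
    exact ⟨b, fun g => (hb g).imp fun _ => Eq.symm⟩
  · rintro ⟨b, hb⟩
    exact ⟨b, fun g => (hb g).imp fun _ => Eq.symm⟩

/-- The conductive positive monoid `M_a = {0} ∪ G_{≥ a}` of a nontrivial totally
ordered abelian group `G` (with `a > 0`) is a finite factorization monoid if and
only if `G` is (infinite) cyclic. -/
theorem conductive_monoid_ff_iff_cyclic {G : Type*} [AddCommGroup G] [LinearOrder G] [IsOrderedAddMonoid G]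
    [Nontrivial G] (a : G) (ha : 0 < a) :
    (SAtomic ({0} ∪ Set.Ici a : Set G) ∧
      ∀ x ∈ ({0} ∪ Set.Ici a : Set G),
        {l : Multiset G | (∀ b ∈ l, SAtom ({0} ∪ Set.Ici a : Set G) b) ∧
          l.sum = x}.Finite) ↔
    ∃ b : G, ∀ g : G, ∃ n : ℤ, g = n • b :=
  conductive_monoid_ff_iff_cyclic_general a ha
end

section
/- Let G be a nontrivial totally ordered abelian group and a > 0 in G. The conductive monoid M_a = {0} ∪ {g ∈ G : g ≥ a} is a length-factorial monoid if and only if G = Z·b for some b > 0 in G and a ∈ {b, 2b}. -/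
/-!
The atoms of `M_a` are exactly the elements of `[a, 2a)`. Two atoms `a < x < y` give the two
factorizations `a + y = x + (a + y - x)` of equal length, so length-factoriality leaves at most
one element `c` in `(a, 2a)`. If there is none, `b = a` generates; otherwise reflecting `c` in the
midpoint of the interval forces `2c = 3a`, and `b = c - a` generates with `a = 2b`. In both cases
every positive element below `2a` is a multiple of `b`, hence, by atomicity, every positive element.
Conversely, `G = ℤb` is archimedean, which makes `M_a` atomic, and the atoms lie in `{a, a + b}`,
where a factorization is determined by its length and its sum.
-/

namespace Multiset

variable {α : Type*}

lemma eq_replicate_add_replicate [DecidableEq α] {x y : α} (hxy : x ≠ y) {l : Multiset α}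
    (h : ∀ z ∈ l, z = x ∨ z = y) : l = replicate (count x l) x + replicate (count y l) y := by
  ext z
  rw [count_add, count_replicate, count_replicate]
  by_cases hzx : x = z
  · subst hzx
    simp [Ne.symm hxy]
  by_cases hzy : y = z
  · subst hzy
    simp [hxy]
  have hz : z ∉ l := fun hz => (h z hz).elim (fun h => hzx h.symm) (fun h => hzy h.symm)
  simp [hzx, hzy, count_eq_zero_of_notMem hz]

variable {G : Type*} [AddCommGroup G] [LinearOrder G] [IsOrderedAddMonoid G]

lemma eq_of_card_eq_of_sum_eq_of_forall_mem_pair {x d : G} (hd : 0 < d) {l₁ l₂ : Multiset G}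
    (h₁ : ∀ z ∈ l₁, z = x ∨ z = x + d) (h₂ : ∀ z ∈ l₂, z = x ∨ z = x + d)
    (hcard : card l₁ = card l₂) (hsum : l₁.sum = l₂.sum) : l₁ = l₂ := by
  classical
  have hne : x ≠ x + d := (lt_add_of_pos_right x hd).ne
  rw [eq_replicate_add_replicate hne h₁, eq_replicate_add_replicate hne h₂] at hcard hsum ⊢
  simp only [card_add, card_replicate, sum_add, sum_replicate, nsmul_add] at hcard hsum
  have hq : count (x + d) l₁ = count (x + d) l₂ := by
    refine (nsmul_left_strictMono hd).injective ?_
    have : (count x l₁ + count (x + d) l₁) • x + count (x + d) l₁ • d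
        = (count x l₂ + count (x + d) l₂) • x + count (x + d) l₂ • d := by
      simpa only [add_nsmul, add_assoc] using hsum
    rwa [hcard, add_right_inj] at this
  rw [hq, show count x l₁ = count x l₂ by omega]

end Multiset

section Conductive

variable {G : Type*} [AddCommGroup G] [LinearOrder G]

def conductive (a : G) : Set G := {0} ∪ Set.Ici a

def SFactorizationsDeterminedByLength {A : Type*} [AddCommMonoid A] (S : Set A) : Prop :=
  ∀ x ∈ S, ∀ l₁ l₂ : Multiset A, (∀ b ∈ l₁, SAtom S b) → l₁.sum = x →
    (∀ b ∈ l₂, SAtom S b) → l₂.sum = x → l₁.card = l₂.card → l₁ = l₂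

lemma mem_conductive {a x : G} : x ∈ conductive a ↔ x = 0 ∨ a ≤ x := by
  simp [conductive]

lemma nonneg_of_mem_conductive {a y : G} (ha : 0 ≤ a) (hy : y ∈ conductive a) : 0 ≤ y := by
  rcases mem_conductive.1 hy with rfl | hy
  exacts [le_rfl, ha.trans hy]

lemma sUnit_zero {A : Type*} [AddCommMonoid A] {S : Set A} (h : (0 : A) ∈ S) : SUnit S 0 :=
  ⟨0, h, add_zero 0⟩

variable [IsOrderedAddMonoid G] {a b x : G}

lemma not_sUnit_of_pos {S : Set G} (hS : ∀ y ∈ S, 0 ≤ y) (hx : 0 < x) : ¬ SUnit S x := by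
  rintro ⟨y, hy, hxy⟩
  exact (add_pos_of_pos_of_nonneg hx (hS y hy)).ne' hxy

lemma sAtom_conductive_iff (ha : 0 < a) : SAtom (conductive a) x ↔ x ∈ Set.Ico a (a + a) := by
  have hS : ∀ y ∈ conductive a, 0 ≤ y := fun _ => nonneg_of_mem_conductive ha.le
  have h0 : (0 : G) ∈ conductive a := mem_conductive.2 (Or.inl rfl)
  constructor
  · rintro ⟨hx, hxu, hsplit⟩
    have hax : a ≤ x := (mem_conductive.1 hx).resolve_left (by rintro rfl; exact hxu (sUnit_zero h0))
    refine ⟨hax, lt_of_not_ge fun h2a => ?_⟩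
    have hxa : a ≤ x - a := le_sub_iff_add_le.2 h2a
    rcases hsplit a (mem_conductive.2 (Or.inr le_rfl)) (x - a) (mem_conductive.2 (Or.inr hxa))
      (add_sub_cancel a x).symm with hu | hu
    · exact not_sUnit_of_pos hS ha hu
    · exact not_sUnit_of_pos hS (ha.trans_le hxa) hu
  · rintro ⟨hax, hx2a⟩
    refine ⟨mem_conductive.2 (Or.inr hax), not_sUnit_of_pos hS (ha.trans_le hax), ?_⟩
    rintro y hy z hz rfl
    rcases mem_conductive.1 hy with rfl | hay
    · exact Or.inl (sUnit_zero h0)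
    rcases mem_conductive.1 hz with rfl | haz
    · exact Or.inr (sUnit_zero h0)
    exact absurd (add_le_add hay haz) hx2a.not_ge

lemma Ioo_subsingleton_of_factorizationsDeterminedByLength (ha : 0 < a)
    (hlf : SFactorizationsDeterminedByLength (conductive a)) :
    (Set.Ioo a (a + a)).Subsingleton := by
  suffices ∀ x ∈ Set.Ioo a (a + a), ∀ y ∈ Set.Ioo a (a + a), ¬ x < y by
    intro x hx y hy
    exact le_antisymm (not_lt.1 (this y hy x hx)) (not_lt.1 (this x hx y hy))
  rintro x ⟨hax, hx2a⟩ y ⟨hay, hy2a⟩ hxy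
  have hatom : ∀ z ∈ Set.Ico a (a + a), SAtom (conductive a) z := fun z hz =>
    (sAtom_conductive_iff ha).2 hz
  have hz : a + y - x ∈ Set.Ico a (a + a) := ⟨by grind, by grind⟩
  have heq := hlf (a + y) (mem_conductive.2 (Or.inr (by grind))) {a, y} {x, a + y - x}
    (by simpa using ⟨hatom a ⟨le_rfl, by grind⟩, hatom y ⟨hay.le, hy2a⟩⟩) (by simp)
    (by simpa using ⟨hatom x ⟨hax.le, hx2a⟩, hatom _ hz⟩) (by simp) (by simp)
  have hx : x ∈ ({a, y} : Multiset G) := by rw [heq]; simp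
  simp only [Multiset.insert_eq_cons, Multiset.mem_cons, Multiset.mem_singleton] at hx
  rcases hx with rfl | rfl
  exacts [hax.ne rfl, hxy.ne rfl]

lemma exists_Ioo_subset_multiples_of_Ioo_subsingleton (ha : 0 < a)
    (h : (Set.Ioo a (a + a)).Subsingleton) :
    ∃ b, 0 < b ∧ (a = b ∨ a = b + b) ∧ ∀ g ∈ Set.Ioo 0 (a + a), g ∈ AddSubmonoid.multiples b := by
  rcases Set.eq_empty_or_nonempty (Set.Ioo a (a + a)) with hempty | ⟨c, hac, hc2a⟩
  · refine ⟨a, ha, Or.inl rfl, fun g ⟨hg0, hg2a⟩ => ?_⟩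
    have hmem : ∀ z, z ∉ Set.Ioo a (a + a) := fun z => hempty ▸ Set.notMem_empty z
    rcases lt_trichotomy g a with hga | rfl | hag
    · exact absurd ⟨by grind, by grind⟩ (hmem (a + g))
    · exact AddSubmonoid.mem_multiples g
    · exact absurd ⟨hag, hg2a⟩ (hmem g)
  have hc : a + a + a - c = c := h ⟨by grind, by grind⟩ ⟨hac, hc2a⟩
  refine ⟨c - a, by grind, Or.inr (by grind), fun g ⟨hg0, hg2a⟩ => ?_⟩
  rcases lt_trichotomy g a with hga | rfl | hag
  · have hgc : a + g = c := h ⟨by grind, by grind⟩ ⟨hac, hc2a⟩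
    exact ⟨1, by grind⟩
  · exact ⟨2, by grind⟩
  · have hgc : g = c := h ⟨hag, hg2a⟩ ⟨hac, hc2a⟩
    exact ⟨3, by grind⟩

lemma mem_multiples_of_sAtomic (ha : 0 < a) (hat : SAtomic (conductive a))
    (hsmall : ∀ g ∈ Set.Ioo 0 (a + a), g ∈ AddSubmonoid.multiples b) {g : G} (hg : 0 < g) :
    g ∈ AddSubmonoid.multiples b := by
  rcases lt_or_ge g a with hga | hag
  · exact hsmall g ⟨hg, by grind⟩
  have hgS : g ∈ conductive a := mem_conductive.2 (Or.inr hag)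
  rcases hat g hgS with hu | ⟨l, hl, rfl⟩
  · exact absurd hu (not_sUnit_of_pos (fun _ => nonneg_of_mem_conductive ha.le) hg)
  refine AddSubmonoid.multiset_sum_mem _ _ fun z hz => hsmall z ?_
  obtain ⟨haz, hz2a⟩ := (sAtom_conductive_iff ha).1 (hl z hz)
  exact ⟨ha.trans_le haz, hz2a⟩

lemma exists_zsmul_eq_of_forall_pos_mem_multiples
    (h : ∀ g : G, 0 < g → g ∈ AddSubmonoid.multiples b) (g : G) : ∃ n : ℤ, g = n • b := by
  rcases lt_trichotomy g 0 with hg | rfl | hg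
  · obtain ⟨n, hn⟩ := (AddSubmonoid.mem_multiples_iff _ _).1 (h (-g) (neg_pos.2 hg))
    exact ⟨-n, by rw [neg_zsmul, natCast_zsmul, hn, neg_neg]⟩
  · exact ⟨0, (zero_zsmul b).symm⟩
  · obtain ⟨n, hn⟩ := (AddSubmonoid.mem_multiples_iff _ _).1 (h g hg)
    exact ⟨n, by rw [natCast_zsmul, hn]⟩

lemma archimedean_of_forall_eq_zsmul (hb : 0 < b) (h : ∀ g : G, ∃ n : ℤ, g = n • b) :
    Archimedean G := by
  refine ⟨fun x y hy => ?_⟩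
  obtain ⟨m, rfl⟩ := h x
  obtain ⟨k, rfl⟩ := h y
  have hk : 0 < k := (zsmul_lt_zsmul_iff_left hb).1 (by rwa [zero_zsmul])
  refine ⟨m.toNat, ?_⟩
  rw [← natCast_zsmul, smul_smul]
  exact zsmul_le_zsmul_left hb.le (by nlinarith [Int.self_le_toNat m, Int.natCast_nonneg m.toNat])

lemma sAtomic_conductive [Archimedean G] (ha : 0 < a) : SAtomic (conductive a) := by
  intro x hx
  rcases mem_conductive.1 hx with rfl | hax
  · exact Or.inl (sUnit_zero (mem_conductive.2 (Or.inl rfl)))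
  right
  obtain ⟨n, hn⟩ := Archimedean.arch x ha
  clear hx
  induction n generalizing x with
  | zero => exact absurd (hax.trans hn) (by simpa using ha)
  | succ n ih =>
    by_cases hx2a : x < a + a
    · exact ⟨{x}, by simpa using (sAtom_conductive_iff ha).2 ⟨hax, hx2a⟩, by simp⟩
    obtain ⟨l, hl, hsum⟩ := ih (x - a) (by grind) (by rw [succ_nsmul] at hn; grind)
    refine ⟨a ::ₘ l, ?_, by simp [hsum]⟩
    simpa using ⟨(sAtom_conductive_iff ha).2 ⟨le_rfl, by grind⟩, hl⟩

lemma sAtom_conductive_eq_or_eq (hb : 0 < b) (h : ∀ g : G, ∃ n : ℤ, g = n • b)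
    (hab : a = b ∨ a = b + b) (hx : SAtom (conductive a) x) : x = a ∨ x = a + b := by
  have ha : 0 < a := by rcases hab with rfl | rfl <;> grind
  obtain ⟨hax, hx2a⟩ := (sAtom_conductive_iff ha).1 hx
  obtain ⟨n, rfl⟩ := h x
  rcases hab with rfl | rfl
  · have h1 : (1 : ℤ) ≤ n := (zsmul_le_zsmul_iff_left hb).1 (by rwa [one_zsmul])
    have h2 : n < 2 := (zsmul_lt_zsmul_iff_left hb).1 (by rwa [two_zsmul])
    left
    rw [show n = 1 by omega, one_zsmul]
  · have h2 : (2 : ℤ) ≤ n := (zsmul_le_zsmul_iff_left hb).1 (by rwa [two_zsmul])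
    have h4 : n < 4 := (zsmul_lt_zsmul_iff_left hb).1 <| by
      rwa [show (4 : ℤ) = 2 + 2 from rfl, add_zsmul, two_zsmul]
    rcases (show n = 2 ∨ n = 3 by omega) with rfl | rfl
    · exact Or.inl (two_zsmul b)
    · right
      rw [show (3 : ℤ) = 2 + 1 by rfl, add_zsmul, two_zsmul, one_zsmul]

lemma factorizationsDeterminedByLength_conductive (hb : 0 < b)
    (h : ∀ g : G, ∃ n : ℤ, g = n • b) (hab : a = b ∨ a = b + b) :
    SFactorizationsDeterminedByLength (conductive a) :=
  fun _ _ _ _ h₁ hs₁ h₂ hs₂ hcard =>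
    Multiset.eq_of_card_eq_of_sum_eq_of_forall_mem_pair hb
      (fun _ hz => sAtom_conductive_eq_or_eq hb h hab (h₁ _ hz))
      (fun _ hz => sAtom_conductive_eq_or_eq hb h hab (h₂ _ hz)) hcard (hs₁.trans hs₂.symm)

end Conductive

theorem conductive_monoid_lf_iff_general {G : Type*} [AddCommGroup G] [LinearOrder G] [IsOrderedAddMonoid G]
    (a : G) (ha : 0 < a) :
    (SAtomic ({0} ∪ Set.Ici a : Set G) ∧
      ∀ x ∈ ({0} ∪ Set.Ici a : Set G), ∀ l₁ l₂ : Multiset G,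
        (∀ b ∈ l₁, SAtom ({0} ∪ Set.Ici a : Set G) b) → l₁.sum = x →
        (∀ b ∈ l₂, SAtom ({0} ∪ Set.Ici a : Set G) b) → l₂.sum = x →
        l₁.card = l₂.card → l₁ = l₂) ↔
    ∃ b : G, 0 < b ∧ (∀ g : G, ∃ n : ℤ, g = n • b) ∧ (a = b ∨ a = b + b) := by
  change SAtomic (conductive a) ∧ SFactorizationsDeterminedByLength (conductive a) ↔ _
  constructor
  · rintro ⟨hat, hlf⟩
    obtain ⟨b, hb, hab, hsmall⟩ := exists_Ioo_subset_multiples_of_Ioo_subsingleton ha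
      (Ioo_subsingleton_of_factorizationsDeterminedByLength ha hlf)
    exact ⟨b, hb, exists_zsmul_eq_of_forall_pos_mem_multiples
      fun _ hg => mem_multiples_of_sAtomic ha hat hsmall hg, hab⟩
  · rintro ⟨b, hb, h, hab⟩
    have := archimedean_of_forall_eq_zsmul hb h
    exact ⟨sAtomic_conductive ha, factorizationsDeterminedByLength_conductive hb h hab⟩

/-- The conductive positive monoid `M_a = {0} ∪ G_{≥ a}` of a nontrivial totally
ordered abelian group `G` (with `a > 0`) is a length-factorial monoid if and only
if `G = ℤ·b` for some `b > 0` and `a ∈ {b, 2b}`. -/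
theorem conductive_monoid_lf_iff {G : Type*} [AddCommGroup G] [LinearOrder G] [IsOrderedAddMonoid G]
    [Nontrivial G] (a : G) (ha : 0 < a) :
    (SAtomic ({0} ∪ Set.Ici a : Set G) ∧
      ∀ x ∈ ({0} ∪ Set.Ici a : Set G), ∀ l₁ l₂ : Multiset G,
        (∀ b ∈ l₁, SAtom ({0} ∪ Set.Ici a : Set G) b) → l₁.sum = x →
        (∀ b ∈ l₂, SAtom ({0} ∪ Set.Ici a : Set G) b) → l₂.sum = x →
        l₁.card = l₂.card → l₁ = l₂) ↔
    ∃ b : G, 0 < b ∧ (∀ g : G, ∃ n : ℤ, g = n • b) ∧ (a = b ∨ a = b + b) :=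
  conductive_monoid_lf_iff_general a ha
end
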